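/- (Appendix Lemma 2.) Let v ⊆ 𝒫 be a valuation such that v ⊨ Well and C ⊆ A_v, where C = {x ∈ U : in'_x ∈ v}. Then: (i) v ⊨ IncludesCp if and only if C⊕ ⊆ E(v)⊕, and (ii) v ⊨ IncludedInCp if and only if E(v)⊕ ⊆ C⊕, where for E ⊆ A_v the range E⊕ is computed in the AF (A_v, R_v). -/
import Mathlib


noncomputable section

namespace DLPA

/-- Propositional variables: awareness, acceptance, attack, auxiliary acceptance
copies, plus countably many further auxiliary variables. -/
inductive PVar (U : Type) : Type
  | aw : U → PVar U
  | inn : U → PVar U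
  | att : U → U → PVar U
  | inn' : U → PVar U
  | aux : Nat → PVar U

-- DL-PA formulas and programs, by mutual recursion.
mutual
  inductive Form (U : Type) : Type
    | var : PVar U → Form U
    | neg : Form U → Form U
    | conj : Form U → Form U → Form U
    | box : Prog U → Form U → Form U
  inductive Prog (U : Type) : Type
    | add : PVar U → Prog U           -- +p
    | rem : PVar U → Prog U           -- −p
    | test : Form U → Prog U          -- φ?
    | seq : Prog U → Prog U → Prog U
    | choice : Prog U → Prog U → Prog U
    | conv : Prog U → Prog U
end

variable {U : Type}

/-- A valuation is a set of propositional variables. -/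
abbrev Val (U : Type) := Set (PVar U)

-- Satisfaction of formulas and interpretation of programs, by mutual recursion.
mutual
  def Sat : Val U → Form U → Prop
    | v, Form.var p => p ∈ v
    | v, Form.neg φ => ¬ Sat v φ
    | v, Form.conj φ ψ => Sat v φ ∧ Sat v ψ
    | v, Form.box π φ => ∀ w, Rel π v w → Sat w φ
  def Rel : Prog U → Val U → Val U → Prop
    | Prog.add p, v, w => w = v ∪ {p}
    | Prog.rem p, v, w => w = v \ {p}
    | Prog.test φ, v, w => w = v ∧ Sat v φ
    | Prog.seq π₁ π₂, v, w => ∃ u, Rel π₁ v u ∧ Rel π₂ u w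
    | Prog.choice π₁ π₂, v, w => Rel π₁ v w ∨ Rel π₂ v w
    | Prog.conv π, v, w => Rel π w v
end

def Form.falsum : Form U := Form.conj (Form.var (PVar.aux 0)) (Form.neg (Form.var (PVar.aux 0)))
def Form.top : Form U := Form.neg Form.falsum
def Form.impl (φ ψ : Form U) : Form U := Form.neg (Form.conj φ (Form.neg ψ))
def Form.disj (φ ψ : Form U) : Form U := Form.neg (Form.conj (Form.neg φ) (Form.neg ψ))
def Form.equiv (φ ψ : Form U) : Form U := Form.conj (Form.impl φ ψ) (Form.impl ψ φ)
def Form.dia (π : Prog U) (φ : Form U) : Form U := Form.neg (Form.box π (Form.neg φ))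
def Prog.skip : Prog U := Prog.test Form.top

/-- Sequential composition of a list of programs (`skip` for the empty list). -/
def seqList {β : Type} (f : β → Prog U) : List β → Prog U
  | [] => Prog.skip
  | p :: ps => Prog.seq (f p) (seqList f ps)

/-- Nondeterministic composition of a list of programs (`skip` for the empty list). -/
def unionList {β : Type} (f : β → Prog U) : List β → Prog U
  | [] => Prog.skip
  | [p] => f p
  | p :: ps => Prog.choice (f p) (unionList f ps)

def mkTrueOne (L : List (PVar U)) : Prog U :=
  unionList (fun p => Prog.seq (Prog.test (Form.neg (Form.var p))) (Prog.add p)) L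
def mkFalseOne (L : List (PVar U)) : Prog U :=
  unionList (fun p => Prog.seq (Prog.test (Form.var p)) (Prog.rem p)) L
def mkTrueSome (L : List (PVar U)) : Prog U :=
  seqList (fun p => Prog.choice (Prog.add p) Prog.skip) L
def mkFalseSome (L : List (PVar U)) : Prog U :=
  seqList (fun p => Prog.choice (Prog.rem p) Prog.skip) L
def vary (L : List (PVar U)) : Prog U :=
  seqList (fun p => Prog.choice (Prog.add p) (Prog.rem p)) L
/-- dis(ATT_R): for each pair (x,y) in the list, make true att_{x,y} or att_{y,x}. -/
def dis (L : List (U × U)) : Prog U :=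
  seqList (fun q => Prog.choice (Prog.add (PVar.att q.1 q.2)) (Prog.add (PVar.att q.2 q.1))) L

def conjList : List (Form U) → Form U
  | [] => Form.top
  | φ :: φs => Form.conj φ (conjList φs)
def disjList : List (Form U) → Form U
  | [] => Form.falsum
  | φ :: φs => Form.disj φ (disjList φs)

/-- The elements of a finite universe in a fixed order. -/
def enum (U : Type) [Fintype U] : List U := Finset.univ.toList

def bigConj [Fintype U] (f : U → Form U) : Form U := conjList ((enum U).map f)
def bigDisj [Fintype U] (f : U → Form U) : Form U := disjList ((enum U).map f)

def INlist (U : Type) [Fintype U] : List (PVar U) := (enum U).map PVar.inn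

/-- copy(IN_U) copies the value of in_x to in'_x, for every x ∈ U. -/
def copyIN (U : Type) [Fintype U] : Prog U :=
  seqList (fun x => Prog.choice
      (Prog.seq (Prog.test (Form.var (PVar.inn x))) (Prog.add (PVar.inn' x)))
      (Prog.seq (Prog.test (Form.neg (Form.var (PVar.inn x)))) (Prog.rem (PVar.inn' x))))
    (enum U)

def Well (U : Type) [Fintype U] : Form U :=
  bigConj (fun x => Form.impl (Form.var (PVar.inn x)) (Form.var (PVar.aw x)))

def ConFree (U : Type) [Fintype U] : Form U :=
  Form.conj (Well U) (bigConj fun x => bigConj fun y =>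
    Form.neg (Form.conj (Form.var (PVar.inn x))
      (Form.conj (Form.var (PVar.inn y)) (Form.var (PVar.att x y)))))

def AdmissibleF (U : Type) [Fintype U] : Form U :=
  Form.conj (ConFree U) (bigConj fun x => Form.impl (Form.var (PVar.inn x))
    (bigConj fun y => Form.impl (Form.conj (Form.var (PVar.aw y)) (Form.var (PVar.att y x)))
      (bigDisj fun z => Form.conj (Form.var (PVar.inn z)) (Form.var (PVar.att z y)))))

def StableF (U : Type) [Fintype U] : Form U :=
  Form.conj (Well U) (bigConj fun x => Form.impl (Form.var (PVar.aw x))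
    (Form.equiv (Form.var (PVar.inn x))
      (Form.neg (bigDisj fun y => Form.conj (Form.var (PVar.inn y)) (Form.var (PVar.att y x))))))

def CompleteF (U : Type) [Fintype U] : Form U :=
  Form.conj (ConFree U) (bigConj fun x => Form.equiv (Form.var (PVar.inn x))
    (bigConj fun y => Form.impl (Form.conj (Form.var (PVar.aw y)) (Form.var (PVar.att y x)))
      (bigDisj fun z => Form.conj (Form.var (PVar.inn z)) (Form.var (PVar.att z y)))))

def GroundedF (U : Type) [Fintype U] : Form U :=
  Form.conj (CompleteF U)
    (Form.box (Prog.seq (mkFalseOne (INlist U)) (mkFalseSome (INlist U))) (Form.neg (CompleteF U)))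

def PreferredF (U : Type) [Fintype U] : Form U :=
  Form.conj (AdmissibleF U)
    (Form.box (Prog.seq (mkTrueOne (INlist U)) (mkTrueSome (INlist U))) (Form.neg (AdmissibleF U)))

def NaiveF (U : Type) [Fintype U] : Form U :=
  Form.conj (ConFree U) (Form.box (mkTrueOne (INlist U)) (Form.neg (ConFree U)))

def IncludedInCp (U : Type) [Fintype U] : Form U :=
  bigConj fun x => Form.impl
    (Form.disj (Form.var (PVar.inn x)) (Form.conj (Form.var (PVar.aw x))
      (bigDisj fun y => Form.conj (Form.var (PVar.inn y)) (Form.var (PVar.att y x)))))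
    (Form.disj (Form.var (PVar.inn' x)) (Form.conj (Form.var (PVar.aw x))
      (bigDisj fun y => Form.conj (Form.var (PVar.inn' y)) (Form.var (PVar.att y x)))))

def IncludesCp (U : Type) [Fintype U] : Form U :=
  bigConj fun x => Form.impl
    (Form.disj (Form.var (PVar.inn' x)) (Form.conj (Form.var (PVar.aw x))
      (bigDisj fun y => Form.conj (Form.var (PVar.inn' y)) (Form.var (PVar.att y x)))))
    (Form.disj (Form.var (PVar.inn x)) (Form.conj (Form.var (PVar.aw x))
      (bigDisj fun y => Form.conj (Form.var (PVar.inn y)) (Form.var (PVar.att y x)))))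

/-- makeExt^σ = vary(IN_U); φ_σ? -/
def makeExt (U : Type) [Fintype U] (φ : Form U) : Prog U :=
  Prog.seq (vary (INlist U)) (Prog.test φ)

def SemiStableF (U : Type) [Fintype U] : Form U :=
  Form.conj (CompleteF U)
    (Form.box (Prog.seq (copyIN U) (makeExt U (CompleteF U)))
      (Form.impl (IncludesCp U) (IncludedInCp U)))

/-- A_v -/
def Av (v : Val U) : Set U := {x | PVar.aw x ∈ v}
/-- R_v -/
def Rv (v : Val U) : Set (U × U) := {q | q.1 ∈ Av v ∧ q.2 ∈ Av v ∧ PVar.att q.1 q.2 ∈ v}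
/-- E(v) -/
def Ev (v : Val U) : Set U := {x | PVar.inn x ∈ v}
/-- {x ∈ U : in'_x ∈ v} -/
def Cv (v : Val U) : Set U := {x | PVar.inn' x ∈ v}
/-- v_(A,R) = AW_A ∪ ATT_R -/
def valOf (A : Set U) (R : Set (U × U)) : Val U :=
  (PVar.aw '' A) ∪ ((fun q : U × U => PVar.att q.1 q.2) '' R)

/-- E⁺, the set of arguments of A attacked by E in (A,R). -/
def attacked (A : Set U) (R : Set (U × U)) (E : Set U) : Set U :=
  {x ∈ A | ∃ y ∈ E, (y, x) ∈ R}
/-- E⊕ = E ∪ E⁺, the range of E. -/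
def rangeOf (A : Set U) (R : Set (U × U)) (E : Set U) : Set U :=
  E ∪ attacked A R E

def IsConflictFree (A : Set U) (R : Set (U × U)) (E : Set U) : Prop :=
  E ⊆ A ∧ E ∩ attacked A R E = ∅
def Defends (A : Set U) (R : Set (U × U)) (E : Set U) (a : U) : Prop :=
  ∀ x ∈ A, (x, a) ∈ R → x ∈ attacked A R E
def IsAdmissibleExt (A : Set U) (R : Set (U × U)) (E : Set U) : Prop :=
  IsConflictFree A R E ∧ ∀ a ∈ E, Defends A R E a
def IsStableExt (A : Set U) (R : Set (U × U)) (E : Set U) : Prop :=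
  IsConflictFree A R E ∧ A \ E ⊆ attacked A R E
def IsCompleteExt (A : Set U) (R : Set (U × U)) (E : Set U) : Prop :=
  IsConflictFree A R E ∧ E = {a ∈ A | Defends A R E a}
def IsGroundedExt (A : Set U) (R : Set (U × U)) (E : Set U) : Prop :=
  IsCompleteExt A R E ∧ ∀ E', IsCompleteExt A R E' → E' ⊆ E → E' = E
def IsPreferredExt (A : Set U) (R : Set (U × U)) (E : Set U) : Prop :=
  IsCompleteExt A R E ∧ ∀ E', IsCompleteExt A R E' → E ⊆ E' → E' = E
def IsNaiveExt (A : Set U) (R : Set (U × U)) (E : Set U) : Prop :=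
  IsConflictFree A R E ∧ ∀ E', IsConflictFree A R E' → E ⊆ E' → E' = E
def IsSemiStableExt (A : Set U) (R : Set (U × U)) (E : Set U) : Prop :=
  IsCompleteExt A R E ∧ ¬ ∃ E', IsCompleteExt A R E' ∧ rangeOf A R E ⊂ rangeOf A R E'

end DLPA

end

section Helpers
namespace DLPA
variable {U : Type}

lemma sat_var (v : Val U) (p : PVar U) : Sat v (Form.var p) ↔ p ∈ v := by simp [Sat]
lemma sat_neg (v : Val U) (φ : Form U) : Sat v (Form.neg φ) ↔ ¬ Sat v φ := by simp [Sat]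
lemma sat_conj (v : Val U) (φ ψ : Form U) : Sat v (Form.conj φ ψ) ↔ Sat v φ ∧ Sat v ψ := by simp [Sat]
lemma sat_impl (v : Val U) (φ ψ : Form U) : Sat v (Form.impl φ ψ) ↔ (Sat v φ → Sat v ψ) := by
  simp only [Form.impl, Sat]; tauto
lemma sat_disj (v : Val U) (φ ψ : Form U) : Sat v (Form.disj φ ψ) ↔ (Sat v φ ∨ Sat v ψ) := by
  simp only [Form.disj, Sat]; tauto
lemma sat_top (v : Val U) : Sat v (Form.top : Form U) := by
  simp [Form.top, Form.falsum, Sat]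
lemma not_sat_falsum (v : Val U) : ¬ Sat v (Form.falsum : Form U) := by
  simp [Form.falsum, Sat]

lemma sat_conjList (v : Val U) (L : List (Form U)) :
    Sat v (conjList L) ↔ ∀ φ ∈ L, Sat v φ := by
  induction L with
  | nil => simpa [conjList] using sat_top v
  | cons φ φs ih => simp [conjList, sat_conj, ih]

lemma sat_disjList (v : Val U) (L : List (Form U)) :
    Sat v (disjList L) ↔ ∃ φ ∈ L, Sat v φ := by
  induction L with
  | nil => simpa [disjList] using not_sat_falsum v
  | cons φ φs ih => simp [disjList, sat_disj, ih]

lemma sat_bigConj [Fintype U] (v : Val U) (f : U → Form U) :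
    Sat v (bigConj f) ↔ ∀ x : U, Sat v (f x) := by
  simp [bigConj, sat_conjList, enum]

lemma sat_bigDisj [Fintype U] (v : Val U) (f : U → Form U) :
    Sat v (bigDisj f) ↔ ∃ x : U, Sat v (f x) := by
  simp [bigDisj, sat_disjList, enum]

/-- Key lemma: the formula-level "range" condition matches set-level range. -/
lemma range_char [Fintype U] (v : Val U) (g : U → PVar U)
    (hsub : {x | g x ∈ v} ⊆ Av v) (x : U) :
    (g x ∈ v ∨ (PVar.aw x ∈ v ∧ ∃ y, g y ∈ v ∧ PVar.att y x ∈ v)) ↔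
      x ∈ rangeOf (Av v) (Rv v) {x | g x ∈ v} := by
  constructor
  · rintro (h | ⟨hax, y, hy, hatt⟩)
    · exact Or.inl h
    · exact Or.inr ⟨hax, y, hy, hsub hy, hax, hatt⟩
  · rintro (h | ⟨hax, y, hy, _, _, hatt⟩)
    · exact Or.inl h
    · exact Or.inr ⟨hax, y, hy, hatt⟩

end DLPA
end Helpers

open DLPA in
/-- Appendix Lemma 2. -/
theorem includesCp_includedInCp_lemma
    (U : Type) [Fintype U] [Nonempty U] (v : Val U)
    (hWell : Sat v (Well U)) (hC : Cv v ⊆ Av v) :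
    (Sat v (IncludesCp U) ↔ rangeOf (Av v) (Rv v) (Cv v) ⊆ rangeOf (Av v) (Rv v) (Ev v)) ∧
    (Sat v (IncludedInCp U) ↔ rangeOf (Av v) (Rv v) (Ev v) ⊆ rangeOf (Av v) (Rv v) (Cv v)) := by
  
  have hW : ∀ x : U, PVar.inn x ∈ v → PVar.aw x ∈ v := by
    intro x hx
    have := (sat_bigConj v _).mp hWell x
    rw [sat_impl, sat_var, sat_var] at this
    exact this hx
  have hE : Ev v ⊆ Av v := fun x hx => hW x hx
  have hCv : Cv v = {x | PVar.inn' x ∈ v} := rfl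
  have hEv : Ev v = {x | PVar.inn x ∈ v} := rfl
  constructor
  · rw [IncludesCp, sat_bigConj]
    constructor
    · intro h x hx
      have := h x
      simp only [sat_impl, sat_disj, sat_conj, sat_var, sat_bigDisj] at this
      rw [hEv, ← range_char v PVar.inn hE x]
      rw [hCv, ← range_char v PVar.inn' hC x] at hx
      exact this hx
    · intro h x
      simp only [sat_impl, sat_disj, sat_conj, sat_var, sat_bigDisj]
      rw [range_char v PVar.inn' hC x, range_char v PVar.inn hE x]
      exact fun hx => h hx
  · rw [IncludedInCp, sat_bigConj]
    constructor
    · intro h x hx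
      have := h x
      simp only [sat_impl, sat_disj, sat_conj, sat_var, sat_bigDisj] at this
      rw [hCv, ← range_char v PVar.inn' hC x]
      rw [hEv, ← range_char v PVar.inn hE x] at hx
      exact this hx
    · intro h x
      simp only [sat_impl, sat_disj, sat_conj, sat_var, sat_bigDisj]
      rw [range_char v PVar.inn hE x, range_char v PVar.inn' hC x]
      exact fun hx => h hx
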